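/- arXiv:1001.1748 — 2 statements merged into one kernel-verified Lean document; each statement's English description precedes it below -/
import Mathlib

section
/- Let Ω be a Cantor group with a minimal translation T and identity element e. Then there exists f ∈ C(Ω,ℝ) such that hull(F(e)) is isomorphic to Ω as a topological group, where F(e) = (f(Tⁿ(e)))_{n∈ℤ}. (For instance f(ω) = dist(e, ω) for a metric on Ω compatible with its topology works.) -/
open BoundedContinuousFunction Filter

noncomputable def shiftk (k : ℤ) (d : ℤ →ᵇ ℝ) : ℤ →ᵇ ℝ :=
  d.compContinuous ⟨fun n => n + k, continuous_of_discreteTopology⟩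

noncomputable def orb (d : ℤ →ᵇ ℝ) : Set (ℤ →ᵇ ℝ) := Set.range (fun k : ℤ => shiftk k d)

noncomputable def hull (d : ℤ →ᵇ ℝ) : Set (ℤ →ᵇ ℝ) := closure (orb d)

def IsPeriodicPotential (p : ℤ →ᵇ ℝ) : Prop := (orb p).Finite

def IsLimitPeriodic (d : ℤ →ᵇ ℝ) : Prop :=
  d ∈ closure {p : ℤ →ᵇ ℝ | IsPeriodicPotential p}

noncomputable def shiftMem (d : ℤ →ᵇ ℝ) (k : ℤ) : ↥(hull d) :=
  ⟨shiftk k d, subset_closure ⟨k, rfl⟩⟩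

noncomputable def hullId (d : ℤ →ᵇ ℝ) : ↥(hull d) :=
  ⟨d, subset_closure ⟨0, by ext n; simp [shiftk]⟩⟩

noncomputable def freqModule (d : ℤ →ᵇ ℝ) : AddSubgroup ℝ :=
  AddSubgroup.closure {α : ℝ | ∃ L : ℂ, L ≠ 0 ∧
    Filter.Tendsto (fun n : ℕ => (1 / (2 * (n : ℂ))) *
      ∑ k ∈ Finset.Icc (-(n : ℤ)) (n : ℤ), (d k : ℂ) * Complex.exp (-(Complex.I) * k * α))
      Filter.atTop (nhds L)}

def IsFreqIntegerSet (d : ℤ →ᵇ ℝ) (S : Set ℕ) : Prop :=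
  (∀ n ∈ S, 0 < n) ∧
  freqModule d = AddSubgroup.closure ((fun n : ℕ => 2 * Real.pi / (n : ℝ)) '' S)

def CanonicalMul (d : ℤ →ᵇ ℝ) (m : ↥(hull d) → ↥(hull d) → ↥(hull d)) : Prop :=
  Continuous (fun p : ↥(hull d) × ↥(hull d) => m p.1 p.2) ∧
  ∀ k l : ℤ, m (shiftMem d k) (shiftMem d l) = shiftMem d (k + l)

def HullGroupIso (d e : ℤ →ᵇ ℝ) : Prop :=
  ∃ md me, CanonicalMul d md ∧ CanonicalMul e me ∧
    ∃ h : ↥(hull d) ≃ₜ ↥(hull e), ∀ x y, h (md x y) = me (h x) (h y)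
variable {Ω : Type*} [TopologicalSpace Ω] [CommGroup Ω] [IsTopologicalGroup Ω] [CompactSpace Ω]
  [TotallyDisconnectedSpace Ω]

/-- The translation `T(ω) = ω·a` is minimal: every `T`-orbit is dense. -/
def IsMinimalTranslation (a : Ω) : Prop :=
  ∀ ω : Ω, Dense (Set.range fun n : ℤ => ω * a ^ n)

/-- `Ω` has no isolated points. -/
def NoIsolatedPoints (Ω : Type*) [TopologicalSpace Ω] : Prop :=
  ∀ ω : Ω, Filter.NeBot (nhdsWithin ω {ω}ᶜ)

/-- `F(ω) = (f(Tⁿ(ω)))_{n ∈ ℤ}` where `T` is the translation by `a`. -/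
noncomputable def sample (f : C(Ω, ℝ)) (a ω : Ω) : ℤ →ᵇ ℝ :=
  (BoundedContinuousFunction.mkOfCompact f).compContinuous
    ⟨fun n : ℤ => ω * a ^ n, continuous_of_discreteTopology⟩


/-!
Open subgroups form a basis at `1` of a compact totally disconnected group, and when `⟨a⟩` is
dense each open subgroup `H` is the closure of `H ∩ ⟨a⟩`. Subgroups of a cyclic group being
countable, so is the basis, hence `Ω` is metrizable. For `f = dist 1` the map
`ω ↦ (f (ω * a ^ n))ₙ` is continuous and injective and turns translation by `a` into the shift,
so it maps the compact space `Ω` homeomorphically onto the closure of the orbit of `F(1)`,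
which is the hull; the group law of `Ω` transported along it is the canonical one.
-/

open Topology

section Metrizable

variable {G : Type*} [Group G]

theorem countable_subgroup_of_isCyclic [IsCyclic G] [Countable G] : Countable (Subgroup G) :=
  Function.Surjective.countable (f := Subgroup.zpowers) fun H =>
    (H.isCyclic_iff_exists_zpowers_eq_top).mp inferInstance

variable [TopologicalSpace G] [IsTopologicalGroup G]

theorem OpenSubgroup.subgroupOf_injective {D : Subgroup G} (hD : Dense (D : Set G)) :
    Function.Injective fun H : OpenSubgroup G => H.toSubgroup.subgroupOf D := by
  have hclosure : ∀ H : OpenSubgroup G, closure ((H.toSubgroup ⊓ D : Subgroup G) : Set G) = H :=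
    fun H => (closure_minimal Set.inter_subset_left H.isClosed).antisymm
      (hD.open_subset_closure_inter H.isOpen)
  intro H K hHK
  rw [← SetLike.coe_set_eq, ← hclosure, ← hclosure, Subgroup.subgroupOf_inj.mp hHK]

theorem countable_openSubgroup_of_dense_zpowers {a : G}
    (hd : Dense (Subgroup.zpowers a : Set G)) : Countable (OpenSubgroup G) :=
  have : Countable (Subgroup.zpowers a) := by
    rw [← SetLike.coe_sort_coe, Subgroup.coe_zpowers]; exact (Set.countable_range _).to_subtype
  have := countable_subgroup_of_isCyclic (G := Subgroup.zpowers a)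
  (OpenSubgroup.subgroupOf_injective hd).countable

variable [CompactSpace G] [TotallyDisconnectedSpace G]

theorem nhds_one_hasBasis_openSubgroup :
    (𝓝 (1 : G)).HasBasis (fun _ : OpenSubgroup G => True) (↑) := by
  refine ⟨fun U => ⟨fun hU => ?_, fun ⟨H, _, hHU⟩ => Filter.mem_of_superset (H.mem_nhds_one) hHU⟩⟩
  obtain ⟨V, hVU, hV, h1V⟩ := mem_nhds_iff.mp hU
  obtain ⟨H, hHV⟩ := ProfiniteGrp.exist_openNormalSubgroup_sub_open_nhds_of_one hV h1V
  exact ⟨H.toOpenSubgroup, trivial, hHV.trans hVU⟩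

theorem metrizableSpace_of_dense_zpowers {a : G} (hd : Dense (Subgroup.zpowers a : Set G)) :
    TopologicalSpace.MetrizableSpace G := by
  have := countable_openSubgroup_of_dense_zpowers hd
  have := (nhds_one_hasBasis_openSubgroup (G := G)).isCountablyGenerated
  let := IsTopologicalGroup.rightUniformSpace G
  have : (uniformity G).IsCountablyGenerated := by
    rw [uniformity_eq_comap_nhds_one']
    exact Filter.comap.isCountablyGenerated _ _
  exact UniformSpace.metrizableSpace

end Metrizable

section Sample

variable {G : Type*} [TopologicalSpace G] [CommGroup G] [CompactSpace G]

theorem shiftk_sample (f : C(G, ℝ)) (a ω : G) (k : ℤ) :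
    shiftk k (sample f a ω) = sample f a (ω * a ^ k) := by
  ext n
  change f (ω * a ^ (n + k)) = f (ω * a ^ k * a ^ n)
  rw [zpow_add, mul_right_comm, mul_assoc]

variable [ContinuousMul G]

theorem continuous_sample (f : C(G, ℝ)) (a : G) : Continuous (sample f a) :=
  have hcurry : Continuous fun ω : G => f.comp (ContinuousMap.mulLeft ω) :=
    (ContinuousMap.curry ⟨fun p : G × G => f (p.1 * p.2), by fun_prop⟩).continuous
  (continuous_compContinuous ⟨(a ^ · : ℤ → G), continuous_of_discreteTopology⟩).comp
    ((ContinuousMap.isometryEquivBoundedOfCompact G ℝ).continuous.comp hcurry)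

theorem sample_injective {f : C(G, ℝ)} (hf : ∀ x, f x = f 1 → x = 1) {a : G}
    (hd : Dense (Set.range (a ^ · : ℤ → G))) : Function.Injective (sample f a) := by
  intro ω ω' h
  have htranslate : (fun x => f (ω * x)) = fun x => f (ω' * x) :=
    Continuous.ext_on hd (by fun_prop) (by fun_prop) <| by
      rintro _ ⟨n, rfl⟩
      exact DFunLike.congr_fun h n
  have h1 : f (ω * ω'⁻¹) = f 1 := by simpa using congrFun htranslate ω'⁻¹
  exact mul_inv_eq_one.mp (hf _ h1)

theorem hull_sample_one (f : C(G, ℝ)) {a : G} (hd : Dense (Set.range (a ^ · : ℤ → G))) :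
    hull (sample f a 1) = Set.range (sample f a) := by
  have horb : orb (sample f a 1) = sample f a '' Set.range (a ^ · : ℤ → G) := by
    simp only [orb, shiftk_sample, one_mul, ← Set.range_comp]; rfl
  rw [hull, horb, (continuous_sample f a).isClosedMap.closure_image_eq_of_continuous
    (continuous_sample f a), hd.closure_eq, Set.image_univ]

theorem exists_homeomorph_hull_sample {f : C(G, ℝ)} (hf : ∀ x, f x = f 1 → x = 1) {a : G}
    (hd : Dense (Set.range (a ^ · : ℤ → G))) :
    ∃ e : G ≃ₜ hull (sample f a 1), ∀ k : ℤ, e (a ^ k) = shiftMem (sample f a 1) k := by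
  have hemb := ((continuous_sample f a).isClosedEmbedding (sample_injective hf hd)).isEmbedding
  refine ⟨hemb.toHomeomorph.trans (Homeomorph.setCongr (hull_sample_one f hd).symm), fun k => ?_⟩
  apply Subtype.ext
  change sample f a (a ^ k) = shiftk k (sample f a 1)
  rw [shiftk_sample, one_mul]

end Sample

theorem exists_canonicalMul_of_homeomorph {G : Type*} [TopologicalSpace G] [Group G]
    [ContinuousMul G] {d : ℤ →ᵇ ℝ} {a : G} (e : G ≃ₜ hull d)
    (he : ∀ k : ℤ, e (a ^ k) = shiftMem d k) :
    ∃ m, CanonicalMul d m ∧ ∃ h : hull d ≃ₜ G, ∀ x y, h (m x y) = h x * h y := by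
  refine ⟨fun x y => e (e.symm x * e.symm y), ⟨by fun_prop, fun k l => ?_⟩, e.symm, fun x y => ?_⟩
  · simp only [← he, Homeomorph.symm_apply_apply, zpow_add]
  · exact e.symm_apply_apply _

theorem statement_11_general {Ω : Type*} [TopologicalSpace Ω] [CommGroup Ω] [IsTopologicalGroup Ω]
    [CompactSpace Ω] [TotallyDisconnectedSpace Ω]
    (a : Ω) (hmin : IsMinimalTranslation a) :
    ∃ f : C(Ω, ℝ), ∃ m, CanonicalMul (sample f a 1) m ∧
      ∃ h : ↥(hull (sample f a 1)) ≃ₜ Ω, ∀ x y, h (m x y) = h x * h y := by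
  have hd : Dense (Set.range (a ^ · : ℤ → Ω)) := by simpa using hmin 1
  have := metrizableSpace_of_dense_zpowers (a := a) (by rwa [Subgroup.coe_zpowers])
  let := TopologicalSpace.metrizableSpaceMetric Ω
  let f : C(Ω, ℝ) := ⟨dist 1, by fun_prop⟩
  have hf : ∀ x, f x = f 1 → x = 1 := fun x hx => by simpa [f, eq_comm] using hx
  obtain ⟨e, he⟩ := exists_homeomorph_hull_sample hf hd
  exact ⟨f, exists_canonicalMul_of_homeomorph e he⟩

/-- For a Cantor group `Ω` with a minimal translation (by `a`) there exists
`f ∈ C(Ω,ℝ)` such that `hull (F(e))` (with its canonical group structure) is isomorphic to `Ω`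
as a topological group, where `F(e) = (f(Tⁿ(e)))_{n∈ℤ}` and `e = 1`. -/
theorem statement_11 {Ω : Type*} [TopologicalSpace Ω] [CommGroup Ω] [IsTopologicalGroup Ω]
    [CompactSpace Ω] [TotallyDisconnectedSpace Ω] (hni : NoIsolatedPoints Ω)
    (a : Ω) (hmin : IsMinimalTranslation a) :
    ∃ f : C(Ω, ℝ), ∃ m, CanonicalMul (sample f a 1) m ∧
      ∃ h : ↥(hull (sample f a 1)) ≃ₜ Ω, ∀ x y, h (m x y) = h x * h y :=
  statement_11_general a hmin
end

section
/- For any limit-periodic potential d ∈ ℓ∞(ℤ), the hull hull(d), with its canonical group structure, is a procyclic group. Equivalently, every Cantor group that admits a minimal translation is a procyclic group. -/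
open BoundedContinuousFunction Filter

universe u

/-!
The shift acts on `ℤ →ᵇ ℝ` by isometries, so `‖k‖ := dist (σᵏ d) d` is a seminorm on `ℤ` and the
orbit map `k ↦ σᵏ d` is an isometry from `(ℤ, ‖·‖)` onto a dense subset of the complete space
`hull d`. Hence `hull d` is the completion of this seminormed group and inherits its group
structure. If `p` is `N`-periodic with `dist d p < ε`, then `‖k N‖ ≤ 2ε` for every `k`, so the
closure of the image of `N ℤ` is a closed subgroup of finite index, hence open, lying in the
`2ε`-ball: arbitrarily small open subgroups make the hull totally disconnected. The same
approximation covers the orbit of `d` by finitely many `ε`-balls around the orbit of `p`, which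
gives compactness.
-/

open Topology UniformSpace

@[to_additive]
theorem totallyDisconnectedSpace_of_exists_openSubgroup_subset {G : Type*} [TopologicalSpace G]
    [Group G] [IsTopologicalGroup G] [T1Space G]
    (h : ∀ U ∈ 𝓝 (1 : G), ∃ H : OpenSubgroup G, (H : Set G) ⊆ U) :
    TotallyDisconnectedSpace G := by
  refine totallyDisconnectedSpace_iff_connectedComponent_one.2
    (Set.eq_singleton_iff_unique_mem.2 ⟨mem_connectedComponent, fun x hx => ?_⟩)
  by_contra hne
  obtain ⟨H, hH⟩ := h {x}ᶜ (isOpen_compl_singleton.mem_nhds (Ne.symm hne))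
  exact hH (H.isClopen.connectedComponent_subset H.one_mem hx) rfl

@[to_additive]
theorem Subgroup.finiteIndex_topologicalClosure_map {A G : Type*} [Group A] [Group G]
    [TopologicalSpace G] [IsTopologicalGroup G] {f : A →* G} (hf : DenseRange f)
    (K : Subgroup A) [K.FiniteIndex] : (K.map f).topologicalClosure.FiniteIndex := by
  set H := (K.map f).topologicalClosure
  have : IsClosed (H : Set G) := (K.map f).isClosed_topologicalClosure
  let g : A ⧸ K → G ⧸ H := Quotient.map' f fun a b hab => by
    rw [QuotientGroup.leftRel_apply, ← map_inv, ← map_mul] at *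
    exact (K.map f).le_topologicalClosure (Subgroup.mem_map_of_mem f hab)
  have hfin : (Set.range ((↑) ∘ f : A → G ⧸ H)).Finite :=
    (Set.finite_range g).subset (by rintro _ ⟨a, rfl⟩; exact ⟨a, rfl⟩)
  have hdense : DenseRange ((↑) ∘ f : A → G ⧸ H) :=
    QuotientGroup.mk_surjective.denseRange.comp hf QuotientGroup.continuous_mk
  -- `G ⧸ H` is T1 because `H` is closed, so the finite dense set `range (↑) ∘ f` is everything
  have huniv : Set.range ((↑) ∘ f : A → G ⧸ H) = Set.univ := by
    simpa only [hfin.isClosed.closure_eq] using hdense.closure_eq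
  have : Finite (G ⧸ H) := Set.finite_univ_iff.1 (huniv ▸ hfin)
  exact Subgroup.finiteIndex_of_finite_quotient

@[simp] lemma shiftk_apply (k : ℤ) (x : ℤ →ᵇ ℝ) (n : ℤ) : shiftk k x n = x (n + k) := rfl

lemma shiftk_shiftk (k l : ℤ) (x : ℤ →ᵇ ℝ) : shiftk k (shiftk l x) = shiftk (k + l) x := by
  ext n; simp [add_assoc]

@[simp] lemma shiftk_zero (x : ℤ →ᵇ ℝ) : shiftk 0 x = x := by ext n; simp

lemma isometry_shiftk (k : ℤ) : Isometry (shiftk k) := by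
  refine Isometry.of_dist_eq fun x y => le_antisymm ?_ ?_
  · exact (dist_le dist_nonneg).2 fun n => dist_coe_le_dist (n + k)
  · refine (dist_le dist_nonneg).2 fun n => ?_
    simpa using dist_coe_le_dist (f := shiftk k x) (g := shiftk k y) (n - k)

lemma dist_shiftk_shiftk (k l : ℤ) (x : ℤ →ᵇ ℝ) :
    dist (shiftk k x) (shiftk l x) = dist (shiftk (k - l) x) x := by
  rw [← (isometry_shiftk l).dist_eq (shiftk (k - l) x), shiftk_shiftk, add_sub_cancel]

lemma exists_pos_shiftk_eq_self {p : ℤ →ᵇ ℝ} (hp : IsPeriodicPotential p) :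
    ∃ N : ℤ, 0 < N ∧ shiftk N p = p := by
  obtain ⟨a, b, hab, hne⟩ := Function.not_injective_iff.1
    fun hinj => Set.infinite_range_of_injective hinj hp
  have shiftk_sub (a b : ℤ) (h : shiftk a p = shiftk b p) : shiftk (a - b) p = p := by
    simpa [shiftk_shiftk, neg_add_eq_sub] using congrArg (shiftk (-b)) h
  rcases lt_or_gt_of_ne (sub_ne_zero.2 hne) with h | h
  · exact ⟨b - a, by omega, shiftk_sub b a hab.symm⟩
  · exact ⟨a - b, h, shiftk_sub a b hab⟩

lemma shiftk_mul_eq_self {p : ℤ →ᵇ ℝ} {N : ℤ} (hN : shiftk N p = p) (k : ℤ) :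
    shiftk (k * N) p = p := by
  induction k using Int.induction_on with
  | zero => simp
  | succ k ih => rw [add_mul, one_mul, ← shiftk_shiftk, hN, ih]
  | pred k ih =>
    have hneg : shiftk (-N) p = p := by
      simpa [shiftk_shiftk] using (congrArg (shiftk (-N)) hN).symm
    rw [sub_mul, one_mul, sub_eq_add_neg, ← shiftk_shiftk, hneg, ih]

lemma dist_shiftk_le_of_shiftk_eq_self {d p : ℤ →ᵇ ℝ} {k : ℤ} (hk : shiftk k p = p) :
    dist (shiftk k d) d ≤ 2 * dist d p := by
  calc dist (shiftk k d) d ≤ dist (shiftk k d) (shiftk k p) + dist p d := by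
        simpa only [hk] using dist_triangle (shiftk k d) (shiftk k p) d
    _ = 2 * dist d p := by rw [(isometry_shiftk k).dist_eq, dist_comm p d, two_mul]

lemma isCompact_hull {d : ℤ →ᵇ ℝ} (hd : IsLimitPeriodic d) : IsCompact (hull d) := by
  refine (TotallyBounded.closure ?_).isCompact_of_isClosed isClosed_closure
  refine Metric.totallyBounded_iff.2 fun ε hε => ?_
  obtain ⟨p, hp, hdp⟩ := Metric.mem_closure_iff.1 hd ε hε
  refine ⟨orb p, hp, ?_⟩
  rintro _ ⟨k, rfl⟩
  exact Set.mem_biUnion ⟨k, rfl⟩ (by rwa [Metric.mem_ball, (isometry_shiftk k).dist_eq])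

lemma denseRange_shiftMem (d : ℤ →ᵇ ℝ) : DenseRange (shiftMem d) :=
  Subtype.dense_iff.2 (by rw [← Set.range_comp]; exact subset_rfl)

noncomputable def displacementSeminorm (d : ℤ →ᵇ ℝ) : AddGroupSeminorm ℤ where
  toFun k := dist (shiftk k d) d
  map_zero' := dist_eq_zero.2 (shiftk_zero d)
  add_le' k l := by
    calc dist (shiftk (k + l) d) d ≤ dist (shiftk (k + l) d) (shiftk k d) + dist (shiftk k d) d :=
          dist_triangle _ _ _
      _ = dist (shiftk k d) d + dist (shiftk l d) d := by
          rw [dist_shiftk_shiftk, add_sub_cancel_left, add_comm]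
  neg' k := by rw [← zero_sub, ← dist_shiftk_shiftk, shiftk_zero, dist_comm]

/-- `ℤ` with `dist k l = dist (σᵏ d) (σˡ d)`: a type synonym, so as not to clash with the usual
metric on `ℤ`. -/
def ShiftIndex (_d : ℤ →ᵇ ℝ) : Type := ℤ

noncomputable instance (d : ℤ →ᵇ ℝ) : SeminormedAddCommGroup (ShiftIndex d) :=
  @AddGroupSeminorm.toSeminormedAddCommGroup ℤ _ (displacementSeminorm d)

lemma ShiftIndex.dist_eq (d : ℤ →ᵇ ℝ) (k l : ShiftIndex d) :
    dist k l = dist (shiftk k d) (shiftk l d) :=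
  (dist_eq_norm k l).trans (dist_shiftk_shiftk k l d).symm

lemma isometry_shiftMem (d : ℤ →ᵇ ℝ) : Isometry fun k : ShiftIndex d => shiftMem d k :=
  Isometry.of_dist_eq fun k l => (ShiftIndex.dist_eq d k l).symm

noncomputable def hullCompletion (d : ℤ →ᵇ ℝ) : AbstractCompletion (ShiftIndex d) where
  space := hull d
  coe k := shiftMem d k
  uniformStruct := inferInstance
  complete := isClosed_closure.completeSpace_coe
  separation := inferInstance
  isUniformInducing := (isometry_shiftMem d).isUniformInducing
  dense := denseRange_shiftMem d

noncomputable def hullEquiv (d : ℤ →ᵇ ℝ) : Completion (ShiftIndex d) ≃ᵤ hull d :=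
  Completion.cPkg.compareEquiv (hullCompletion d)

noncomputable def orbitHom (d : ℤ →ᵇ ℝ) : ℤ →+ Completion (ShiftIndex d) :=
  (Completion.toCompl : ShiftIndex d →+ Completion (ShiftIndex d))

lemma norm_orbitHom (d : ℤ →ᵇ ℝ) (k : ℤ) : ‖orbitHom d k‖ = dist (shiftk k d) d :=
  Completion.norm_coe (E := ShiftIndex d) k

lemma denseRange_orbitHom (d : ℤ →ᵇ ℝ) : DenseRange (orbitHom d) :=
  Completion.denseRange_coe (α := ShiftIndex d)

lemma hullEquiv_orbitHom (d : ℤ →ᵇ ℝ) (k : ℤ) : hullEquiv d (orbitHom d k) = shiftMem d k :=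
  Completion.cPkg.compare_coe (hullCompletion d) k

lemma hullEquiv_zero (d : ℤ →ᵇ ℝ) : hullEquiv d 0 = hullId d := by
  rw [← (orbitHom d).map_zero, hullEquiv_orbitHom]
  exact Subtype.ext (shiftk_zero d)

lemma canonicalMul_hullEquiv (d : ℤ →ᵇ ℝ) :
    CanonicalMul d fun x y => hullEquiv d ((hullEquiv d).symm x + (hullEquiv d).symm y) := by
  refine ⟨(hullEquiv d).continuous.comp (((hullEquiv d).symm.continuous.comp continuous_fst).add
    ((hullEquiv d).symm.continuous.comp continuous_snd)), fun k l => ?_⟩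
  have symm_shiftMem (k : ℤ) : (hullEquiv d).symm (shiftMem d k) = orbitHom d k :=
    (hullEquiv d).symm_apply_eq.2 (hullEquiv_orbitHom d k).symm
  simp only [symm_shiftMem, ← map_add, hullEquiv_orbitHom]

lemma totallyDisconnectedSpace_completion_shiftIndex {d : ℤ →ᵇ ℝ} (hd : IsLimitPeriodic d) :
    TotallyDisconnectedSpace (Completion (ShiftIndex d)) := by
  refine totallyDisconnectedSpace_of_exists_openAddSubgroup_subset fun U hU => ?_
  obtain ⟨r, hr, hrU⟩ := Metric.mem_nhds_iff.1 hU
  obtain ⟨p, hp, hdp⟩ := Metric.mem_closure_iff.1 hd (r / 4) (by positivity)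
  obtain ⟨N, hN, hNp⟩ := exists_pos_shiftk_eq_self hp
  let K := AddSubgroup.zmultiples N
  have : K.FiniteIndex := ⟨(Int.index_zmultiples N).trans_ne (by omega)⟩
  let H := (K.map (orbitHom d)).topologicalClosure
  have : H.FiniteIndex := AddSubgroup.finiteIndex_topologicalClosure_map (denseRange_orbitHom d) K
  have hsmall : (H : Set (Completion (ShiftIndex d))) ⊆ Metric.closedBall 0 (r / 2) := by
    refine closure_minimal ?_ Metric.isClosed_closedBall
    rintro _ ⟨_, ⟨j, rfl⟩, rfl⟩
    dsimp only
    rw [Metric.mem_closedBall, dist_zero_right, norm_orbitHom, smul_eq_mul]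
    linarith [dist_shiftk_le_of_shiftk_eq_self (d := d) (shiftk_mul_eq_self hNp j)]
  exact ⟨⟨H, H.isOpen_of_isClosed_of_finiteIndex (K.map _).isClosed_topologicalClosure⟩,
    hsmall.trans ((Metric.closedBall_subset_ball (by linarith)).trans hrU)⟩

/-- For any limit-periodic `d ∈ ℓ∞(ℤ)`, the hull `hull d` with its canonical
group structure is a procyclic group: it is profinite (compact and totally disconnected) and
carries a (commutative, topological) group structure with identity `d` in which the cyclic
subgroup generated by `σ(d)` (namely `{σᵏ(d) : k ∈ ℤ}`) is dense. Equivalently, every Cantor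
group admitting a minimal translation is procyclic, i.e. has a dense cyclic subgroup. -/
theorem statement_18 (d : ℤ →ᵇ ℝ) (hd : IsLimitPeriodic d) :
    (IsCompact (hull d) ∧ IsTotallyDisconnected (hull d) ∧
      ∃ m : ↥(hull d) → ↥(hull d) → ↥(hull d), ∃ inv : ↥(hull d) → ↥(hull d),
        CanonicalMul d m ∧ Continuous inv ∧
        (∀ x, m (hullId d) x = x) ∧
        (∀ x y z, m (m x y) z = m x (m y z)) ∧
        (∀ x, m (inv x) x = hullId d) ∧
        (∀ x y, m x y = m y x) ∧
        -- the cyclic subgroup generated by `σ(d)`, i.e. `{σᵏ(d)}`, is dense in the hull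
        Dense (Set.range fun k : ℤ => shiftMem d k)) ∧
    -- equivalently: every Cantor group with a minimal translation is procyclic
    (∀ (Ω : Type u) [TopologicalSpace Ω] [CommGroup Ω] [IsTopologicalGroup Ω]
        [CompactSpace Ω] [TotallyDisconnectedSpace Ω],
      (∀ ω : Ω, Filter.NeBot (nhdsWithin ω {ω}ᶜ)) →
      (∃ a : Ω, ∀ ω : Ω, Dense (Set.range fun n : ℤ => ω * a ^ n)) →
      ∃ g : Ω, Dense (Set.range fun n : ℤ => g ^ n)) := by
  set e := hullEquiv d
  have := totallyDisconnectedSpace_completion_shiftIndex hd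
  have hdisc : TotallyDisconnectedSpace (hull d) := e.toHomeomorph.totallyDisconnectedSpace
  refine ⟨⟨isCompact_hull hd, totallyDisconnectedSpace_subtype_iff.1 hdisc,
    fun x y => e (e.symm x + e.symm y), fun x => e (-e.symm x), canonicalMul_hullEquiv d,
    e.continuous.comp e.symm.continuous.neg, fun x => ?_, fun x y z => ?_, fun x => ?_,
    fun x y => ?_, denseRange_shiftMem d⟩, ?_⟩
  · simp [← hullEquiv_zero, e]
  · simp [add_assoc]
  · simp [← hullEquiv_zero, e]
  · simp [add_comm]
  · rintro Ω _ _ _ _ _ _ ⟨a, ha⟩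
    exact ⟨a, by simpa using ha 1⟩
end
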